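/- arXiv:1912.12073 — 6 statements merged into one kernel-verified Lean document; each statement's English description precedes it below -/
import Mathlib

section
/- For any real vectors $(x_i)_{i=1}^n$ and $(y_i)_{i=1}^n$ and any real number $\gamma$ with $0 < \gamma < 1$, it holds that $\sum_{i=1}^n \sum_{j=1}^n \gamma^{|i-j|} x_i y_j \le \frac{2}{1-\gamma} \left(\sum_{i=1}^n x_i^2\right)^{1/2} \left(\sum_{j=1}^n y_j^2\right)^{1/2}$. -/
/-!
Schur test. The kernel `γ ^ |i - j|` is nonnegative, symmetric, and each of its rows sums to at
most `2 / (1 - γ)`: on either side of the diagonal the exponents are distinct natural numbers, so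
each half is bounded by the geometric series `∑ γ ^ k = 1 / (1 - γ)`. Cauchy–Schwarz on pairs
`(i, j)` with weights `K i j` gives `(∑ K x y)² ≤ (∑ K x²)(∑ K y²)`, and the row and column sum
bounds turn the two factors into `C ∑ x²` and `C ∑ y²`.
-/

open Finset

theorem schur_test {ι κ : Type*} [Fintype ι] [Fintype κ] (K : ι → κ → ℝ)
    (x : ι → ℝ) (y : κ → ℝ) {C : ℝ} (hC : 0 ≤ C) (hK : ∀ i j, 0 ≤ K i j)
    (hrow : ∀ i, ∑ j, K i j ≤ C) (hcol : ∀ j, ∑ i, K i j ≤ C) :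
    ∑ i, ∑ j, K i j * x i * y j ≤ C * √(∑ i, x i ^ 2) * √(∑ j, y j ^ 2) := by
  have hx : ∑ i, ∑ j, K i j * x i ^ 2 ≤ C * ∑ i, x i ^ 2 := by
    rw [mul_sum]
    gcongr with i
    rw [← sum_mul]
    exact mul_le_mul_of_nonneg_right (hrow i) (sq_nonneg _)
  have hy : ∑ i, ∑ j, K i j * y j ^ 2 ≤ C * ∑ j, y j ^ 2 := by
    rw [sum_comm, mul_sum]
    gcongr with j
    rw [← sum_mul]
    exact mul_le_mul_of_nonneg_right (hcol j) (sq_nonneg _)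
  have hCS : (∑ i, ∑ j, K i j * x i * y j) ^ 2 ≤
      (∑ i, ∑ j, K i j * x i ^ 2) * ∑ i, ∑ j, K i j * y j ^ 2 := by
    simp only [← Fintype.sum_prod_type']
    exact sum_sq_le_sum_mul_sum_of_sq_le_mul _
      (fun p _ => mul_nonneg (hK _ _) (sq_nonneg _)) (fun p _ => mul_nonneg (hK _ _) (sq_nonneg _))
      (fun p _ => le_of_eq (by ring))
  calc ∑ i, ∑ j, K i j * x i * y j
      ≤ √((∑ i, ∑ j, K i j * x i ^ 2) * ∑ i, ∑ j, K i j * y j ^ 2) :=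
        (le_abs_self _).trans (Real.abs_le_sqrt hCS)
    _ ≤ √((C * ∑ i, x i ^ 2) * (C * ∑ j, y j ^ 2)) := by
        gcongr
        exact sum_nonneg fun i _ => sum_nonneg fun j _ => mul_nonneg (hK i j) (sq_nonneg _)
    _ = C * √(∑ i, x i ^ 2) * √(∑ j, y j ^ 2) := by
        rw [Real.sqrt_mul (by positivity), Real.sqrt_mul hC, Real.sqrt_mul hC]
        linear_combination (√(∑ i, x i ^ 2) * √(∑ j, y j ^ 2)) * Real.mul_self_sqrt hC

theorem sum_pow_le_inv_one_sub_of_injOn {α : Type*} {γ : ℝ} (h0 : 0 ≤ γ) (h1 : γ < 1)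
    (s : Finset α) {e : α → ℕ} (he : Set.InjOn e s) :
    ∑ a ∈ s, γ ^ e a ≤ (1 - γ)⁻¹ := by
  rw [← sum_image he, ← tsum_geometric_of_lt_one h0 h1]
  exact (summable_geometric_of_lt_one h0 h1).sum_le_tsum _ fun k _ => pow_nonneg h0 k

theorem sum_pow_natAbs_sub_le {γ : ℝ} (h0 : 0 ≤ γ) (h1 : γ < 1) (s : Finset ℤ) (a : ℤ) :
    ∑ k ∈ s, γ ^ (a - k).natAbs ≤ 2 / (1 - γ) := by
  rw [← sum_filter_add_sum_filter_not s (· ≤ a),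
    show 2 / (1 - γ) = (1 - γ)⁻¹ + (1 - γ)⁻¹ by ring]
  gcongr <;>
  refine sum_pow_le_inv_one_sub_of_injOn h0 h1 _ fun k hk l hl hkl => ?_ <;>
  simp only [coe_filter, Set.mem_ofPred_eq] at hk hl <;> omega

theorem stmt_1 (n : ℕ) (x y : Fin n → ℝ) (γ : ℝ) (h0 : 0 < γ) (h1 : γ < 1) :
    ∑ i : Fin n, ∑ j : Fin n, γ ^ ((i : ℤ) - (j : ℤ)).natAbs * x i * y j ≤
      (2 / (1 - γ)) * Real.sqrt (∑ i : Fin n, x i ^ 2) *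
        Real.sqrt (∑ j : Fin n, y j ^ 2) := by
  have hcast : Set.InjOn (fun j : Fin n => (j : ℤ)) (univ : Finset (Fin n)) :=
    fun j _ k _ h => Fin.ext (Int.natCast_inj.mp h)
  have hrow (i : Fin n) : ∑ j : Fin n, γ ^ ((i : ℤ) - (j : ℤ)).natAbs ≤ 2 / (1 - γ) := by
    rw [← sum_image (f := fun k : ℤ => γ ^ ((i : ℤ) - k).natAbs) hcast]
    exact sum_pow_natAbs_sub_le h0.le h1 _ _
  refine schur_test _ x y (div_nonneg zero_le_two (by linarith))
    (fun i j => pow_nonneg h0.le _) hrow fun j => ?_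
  refine le_of_eq_of_le (sum_congr rfl fun i _ => ?_) (hrow j)
  rw [← Int.natAbs_neg, neg_sub]
end

section
/- Let $V$ be a finite-dimensional real inner product space with inner product $a(\cdot,\cdot)$ induced by a symmetric positive definite operator $A$, i.e. $a(u,v) = (Au,v)$. Let $V = \sum_{i=0}^J V_i$ be a decomposition into subspaces, and suppose there is a constant $C_1 > 0$ such that for every choice of $u_i \in V_i$, $\|\sum_{i=0}^J u_i\|_A^2 \le C_1 \sum_{i=0}^J \|u_i\|_A^2$, where $\|u\|_A^2 = a(u,u)$. Suppose further there is $C_2 > 0$ such that every $v \in V$ admits a decomposition $v = \sum_{i=0}^J v_i$ with $v_i \in V_i$ and $\sum_{i=0}^J \|v_i\|_A^2 \le C_2 \|v\|_A^2$. If $B := \sum_{i=0}^J P_i A^{-1}$ where $P_i$ is the $a$-orthogonal projection onto $V_i$ (i.e., the additive Schwarz operator with exact subspace solvers), then all eigenvalues $\lambda$ of $BA$ satisfy $C_2^{-1} \le \lambda \le C_1$, and hence the condition number satisfies $\kappa(BA) \le C_1 C_2$. -/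
/-!
Write `a(u, w) = ⟪A u, w⟫` and `T = ∑ i, P i`. Since `P i` is the `a`-orthogonal projection onto
`Vi i`, `a(v, T v) = ∑ i, a(P i v, P i v)`. The norm estimate for the splitting `T v = ∑ i, P i v`
gives `a(T v, T v) ≤ C₁ a(v, T v)`. For a stable splitting `v = ∑ i, v i` we have
`a(v, v) = ∑ i, a(P i v, v i)`, so Cauchy–Schwarz (for the product form on `ι → V`) gives
`a(v, v)² ≤ a(v, T v) · C₂ a(v, v)`. At an eigenvector these read `μ ≤ C₁` and `1 ≤ C₂ μ`.
-/

open scoped RealInnerProductSpace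

namespace LinearMap.BilinForm

variable {ι M : Type*} [AddCommGroup M] [Module ℝ M] (B : LinearMap.BilinForm ℝ M)

theorem sum_apply_sq_le [Fintype ι] (hs : ∀ x, 0 ≤ B x x) (hB : B.IsSymm) (x y : ι → M) :
    (∑ i, B (x i) (y i)) ^ 2 ≤ (∑ i, B (x i) (x i)) * ∑ i, B (y i) (y i) := by
  let Bι : LinearMap.BilinForm ℝ (ι → M) := ∑ i, B.compl₁₂ (LinearMap.proj i) (LinearMap.proj i)
  have hBι : ∀ x y, Bι x y = ∑ i, B (x i) (y i) := fun x y => by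
    simp [Bι, LinearMap.sum_apply]
  simp only [← hBι]
  refine Bι.apply_sq_le_of_symm (fun x => ?_) ⟨fun x y => ?_⟩ x y
  · rw [hBι]; exact Finset.sum_nonneg fun i _ => hs (x i)
  · simp only [hBι, hB.eq, RingHom.id_apply]

structure IsOrthogonalProjection (U : Submodule ℝ M) (P : M →ₗ[ℝ] M) : Prop where
  mem : ∀ u, P u ∈ U
  orthogonal : ∀ u, ∀ w ∈ U, B (P u - u) w = 0

variable {B} {U : ι → Submodule ℝ M} {P : ι → M →ₗ[ℝ] M}

theorem IsOrthogonalProjection.apply_left {U : Submodule ℝ M} {P : M →ₗ[ℝ] M}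
    (hP : B.IsOrthogonalProjection U P) (u : M) {w : M} (hw : w ∈ U) : B (P u) w = B u w := by
  simpa [sub_eq_zero] using hP.orthogonal u w hw

variable [Fintype ι]

theorem apply_sum_proj (hP : ∀ i, B.IsOrthogonalProjection (U i) (P i)) (v : M) :
    B v ((∑ i, P i) v) = ∑ i, B (P i v) (P i v) := by
  simp only [LinearMap.sum_apply, map_sum, (hP _).apply_left _ ((hP _).mem _)]

theorem apply_sum_proj_nonneg (hs : ∀ x, 0 ≤ B x x)
    (hP : ∀ i, B.IsOrthogonalProjection (U i) (P i)) (v : M) : 0 ≤ B v ((∑ i, P i) v) := by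
  rw [apply_sum_proj hP]
  exact Finset.sum_nonneg fun i _ => hs _

theorem apply_le_mul_apply_sum_proj (hs : ∀ x, 0 ≤ B x x) (hB : B.IsSymm)
    (hP : ∀ i, B.IsOrthogonalProjection (U i) (P i))
    {C₂ : ℝ} (hC₂ : 0 ≤ C₂)
    (hstable : ∀ v, ∃ w : ∀ i, U i, ∑ i, (w i : M) = v ∧ ∑ i, B (w i) (w i) ≤ C₂ * B v v)
    (v : M) : B v v ≤ C₂ * B v ((∑ i, P i) v) := by
  obtain ⟨w, hwv, hw⟩ := hstable v
  have hsplit : B v v = ∑ i, B (P i v) (w i) := by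
    nth_rw 2 [← hwv]
    simp only [map_sum, (hP _).apply_left _ (w _).2]
  have hsq : B v v * B v v ≤ (C₂ * B v ((∑ i, P i) v)) * B v v := calc
    B v v * B v v ≤ (∑ i, B (P i v) (P i v)) * ∑ i, B (w i) (w i) := by
      rw [← sq, hsplit]; exact B.sum_apply_sq_le hs hB _ _
    _ ≤ B v ((∑ i, P i) v) * (C₂ * B v v) := by
      rw [← apply_sum_proj hP]
      exact mul_le_mul_of_nonneg_left hw (apply_sum_proj_nonneg hs hP v)
    _ = (C₂ * B v ((∑ i, P i) v)) * B v v := by ring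
  rcases (hs v).eq_or_lt with h0 | hpos
  · rw [← h0]
    exact mul_nonneg hC₂ (apply_sum_proj_nonneg hs hP v)
  · exact le_of_mul_le_mul_right hsq hpos

theorem apply_sum_proj_le (hP : ∀ i, B.IsOrthogonalProjection (U i) (P i)) {C₁ : ℝ}
    (hupper : ∀ w : ∀ i, U i, B (∑ i, (w i : M)) (∑ i, (w i : M)) ≤ C₁ * ∑ i, B (w i) (w i))
    (v : M) : B ((∑ i, P i) v) ((∑ i, P i) v) ≤ C₁ * B v ((∑ i, P i) v) := by
  rw [apply_sum_proj hP]
  simpa only [LinearMap.sum_apply] using hupper fun i => ⟨P i v, (hP i).mem v⟩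

theorem mem_Icc_of_hasEigenvalue_sum_proj (hpos : ∀ x, x ≠ 0 → 0 < B x x) (hB : B.IsSymm)
    (hP : ∀ i, B.IsOrthogonalProjection (U i) (P i))
    {C₁ C₂ : ℝ} (hC₂ : 0 < C₂)
    (hupper : ∀ w : ∀ i, U i, B (∑ i, (w i : M)) (∑ i, (w i : M)) ≤ C₁ * ∑ i, B (w i) (w i))
    (hstable : ∀ v, ∃ w : ∀ i, U i, ∑ i, (w i : M) = v ∧ ∑ i, B (w i) (w i) ≤ C₂ * B v v)
    {μ : ℝ} (hμ : Module.End.HasEigenvalue (∑ i, P i) μ) : μ ∈ Set.Icc C₂⁻¹ C₁ := by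
  have hs : ∀ x, 0 ≤ B x x := fun x => by
    rcases eq_or_ne x 0 with rfl | hx
    exacts [by simp, (hpos x hx).le]
  obtain ⟨v, hv⟩ := hμ.exists_hasEigenvector
  have hTv : (∑ i, P i) v = μ • v := hv.apply_eq_smul
  have hvv : 0 < B v v := hpos v hv.2
  have hlow : B v v ≤ C₂ * (μ * B v v) := by
    simpa [hTv] using apply_le_mul_apply_sum_proj hs hB hP hC₂.le hstable v
  have hup : μ * (μ * B v v) ≤ C₁ * (μ * B v v) := by
    simpa [hTv] using apply_sum_proj_le hP hupper v
  have hone : 1 ≤ C₂ * μ := le_of_mul_le_mul_right (by linarith) hvv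
  have hμpos : 0 < μ := pos_of_mul_pos_right (one_pos.trans_le hone) hC₂.le
  exact ⟨(inv_le_iff_one_le_mul₀' hC₂).2 hone,
    le_of_mul_le_mul_right hup (mul_pos hμpos hvv)⟩

end LinearMap.BilinForm

theorem stmt_3_general {V : Type*} [NormedAddCommGroup V] [InnerProductSpace ℝ V]
    (J : ℕ) (A : V →ₗ[ℝ] V)
    (hAsym : ∀ u v : V, ⟪A u, v⟫ = ⟪u, A v⟫)
    (hApos : ∀ u : V, u ≠ 0 → 0 < ⟪A u, u⟫)
    (Vi : Fin (J + 1) → Submodule ℝ V)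
    (P : Fin (J + 1) → V →ₗ[ℝ] V)
    (hPrange : ∀ i, ∀ u : V, P i u ∈ Vi i)
    (hPorth : ∀ i (u : V), ∀ w ∈ Vi i, ⟪A (P i u - u), w⟫ = 0)
    (C₁ C₂ : ℝ) (hC₂ : 0 < C₂)
    (hupper : ∀ w : ∀ i, Vi i,
      ⟪A (∑ i, ((w i : V))), ∑ i, ((w i : V))⟫ ≤
        C₁ * ∑ i, ⟪A ((w i : V)), ((w i : V))⟫)
    (hstable : ∀ v : V, ∃ w : ∀ i, Vi i, (∑ i, ((w i : V))) = v ∧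
        ∑ i, ⟪A ((w i : V)), ((w i : V))⟫ ≤ C₂ * ⟪A v, v⟫) :
    (∀ μ : ℝ, Module.End.HasEigenvalue (∑ i, P i : V →ₗ[ℝ] V) μ →
      C₂⁻¹ ≤ μ ∧ μ ≤ C₁) ∧
    (∀ μ₁ μ₂ : ℝ, Module.End.HasEigenvalue (∑ i, P i : V →ₗ[ℝ] V) μ₁ →
      Module.End.HasEigenvalue (∑ i, P i : V →ₗ[ℝ] V) μ₂ →
      μ₁ / μ₂ ≤ C₁ * C₂) := by
  let B : LinearMap.BilinForm ℝ V := (innerₗ V).comp A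
  have hB : B.IsSymm := ⟨fun u v => (hAsym u v).trans (real_inner_comm _ _)⟩
  have hspec μ (hμ : Module.End.HasEigenvalue (∑ i, P i) μ) : C₂⁻¹ ≤ μ ∧ μ ≤ C₁ :=
    B.mem_Icc_of_hasEigenvalue_sum_proj hApos hB (fun i => ⟨hPrange i, hPorth i⟩) hC₂ hupper hstable hμ
  refine ⟨hspec, fun μ₁ μ₂ hμ₁ hμ₂ => ?_⟩
  obtain ⟨hlow₁, hup₁⟩ := hspec μ₁ hμ₁
  have hlow₂ := (hspec μ₂ hμ₂).1
  calc μ₁ / μ₂ ≤ μ₁ / C₂⁻¹ :=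
        div_le_div_of_nonneg_left ((inv_pos.2 hC₂).le.trans hlow₁) (inv_pos.2 hC₂) hlow₂
    _ = μ₁ * C₂ := div_inv_eq_mul _ _
    _ ≤ C₁ * C₂ := mul_le_mul_of_nonneg_right hup₁ hC₂.le

theorem stmt_3 {V : Type*} [NormedAddCommGroup V] [InnerProductSpace ℝ V]
    [FiniteDimensional ℝ V]
    (J : ℕ) (A : V →ₗ[ℝ] V)
    (hAsym : ∀ u v : V, ⟪A u, v⟫ = ⟪u, A v⟫)
    (hApos : ∀ u : V, u ≠ 0 → 0 < ⟪A u, u⟫)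
    (Vi : Fin (J + 1) → Submodule ℝ V)
    (P : Fin (J + 1) → V →ₗ[ℝ] V)
    (hPrange : ∀ i, ∀ u : V, P i u ∈ Vi i)
    (hPproj : ∀ i, ∀ w ∈ Vi i, P i w = w)
    (hPorth : ∀ i (u : V), ∀ w ∈ Vi i, ⟪A (P i u - u), w⟫ = 0)
    (C₁ C₂ : ℝ) (hC₁ : 0 < C₁) (hC₂ : 0 < C₂)
    (hupper : ∀ w : ∀ i, Vi i,
      ⟪A (∑ i, ((w i : V))), ∑ i, ((w i : V))⟫ ≤
        C₁ * ∑ i, ⟪A ((w i : V)), ((w i : V))⟫)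
    (hstable : ∀ v : V, ∃ w : ∀ i, Vi i, (∑ i, ((w i : V))) = v ∧
        ∑ i, ⟪A ((w i : V)), ((w i : V))⟫ ≤ C₂ * ⟪A v, v⟫) :
    (∀ μ : ℝ, Module.End.HasEigenvalue (∑ i, P i : V →ₗ[ℝ] V) μ →
      C₂⁻¹ ≤ μ ∧ μ ≤ C₁) ∧
    (∀ μ₁ μ₂ : ℝ, Module.End.HasEigenvalue (∑ i, P i : V →ₗ[ℝ] V) μ₁ →
      Module.End.HasEigenvalue (∑ i, P i : V →ₗ[ℝ] V) μ₂ →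
      μ₁ / μ₂ ≤ C₁ * C₂) :=
  stmt_3_general J A hAsym hApos Vi P hPrange hPorth C₁ C₂ hC₂ hupper hstable
end

section
/- Let $V$ be a finite-dimensional real inner product space, $A : V \to V$ symmetric positive definite with bilinear form $a(u,v) = (Au,v)$, and let $V = \sum_{i=0}^J V_i$ be a subspace decomposition with symmetric positive definite smoothers $R_i : V_i \to V_i$. Define $B := \sum_{i=0}^J I_i R_i I_i^t$ where $I_i : V_i \to V$ is the inclusion and $I_i^t$ its adjoint. Then $B$ is symmetric positive definite, and for every $u \in V$, $(B^{-1} u, u) = \inf \{ \sum_{i=0}^J (R_i^{-1} u_i, u_i) : u_i \in V_i, \; \sum_{i=0}^J u_i = u \}$. -/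
open scoped RealInnerProductSpace

/-!
Write `Tᵢ = Iᵢᵗ v`. For every splitting `B v = ∑ Iᵢ wᵢ`, Young's inequality
`2 ⟪Tᵢ, wᵢ⟫ - ⟪Rᵢ Tᵢ, Tᵢ⟫ ≤ ⟪Rᵢ⁻¹ wᵢ, wᵢ⟫` summed over `i` reads `⟪v, B v⟫ ≤ ∑ ⟪Rᵢ⁻¹ wᵢ, wᵢ⟫`,
and the splitting `wᵢ = Rᵢ Tᵢ` attains it. `B` is positive definite because a `u` with all
`Iᵢᵗ u = 0` is orthogonal to `∑ range Iᵢ = V`.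
-/

open Finset LinearMap

section Young

variable {E : Type*} [NormedAddCommGroup E] [InnerProductSpace ℝ E]

theorem LinearMap.inner_map_self_nonneg_of_pos {R : E →ₗ[ℝ] E}
    (hR : ∀ x, x ≠ 0 → 0 < ⟪R x, x⟫) (x : E) : 0 ≤ ⟪R x, x⟫ := by
  rcases eq_or_ne x 0 with rfl | hx
  · simp
  · exact (hR x hx).le

/-- Expand `0 ≤ ⟪R (Rinv w - t), Rinv w - t⟫`. -/
theorem LinearMap.IsPositive.two_mul_inner_sub_le {R Rinv : E →ₗ[ℝ] E} (hR : R.IsPositive)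
    (hRinv : R ∘ₗ Rinv = id) (t w : E) : 2 * ⟪t, w⟫ - ⟪R t, t⟫ ≤ ⟪Rinv w, w⟫ := by
  have hw : R (Rinv w) = w := congr($hRinv w)
  have hsq := hR.inner_nonneg_left (Rinv w - t)
  rw [map_sub, hw, inner_sub_left, inner_sub_right, inner_sub_right, hR.isSymmetric, hw,
    real_inner_comm (Rinv w) w, real_inner_comm t w] at hsq
  linarith

end Young

section Preconditioner

variable {ι V : Type*} [Fintype ι] [NormedAddCommGroup V] [InnerProductSpace ℝ V]
  [FiniteDimensional ℝ V] {E : ι → Type*} [∀ i, NormedAddCommGroup (E i)]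
  [∀ i, InnerProductSpace ℝ (E i)] [∀ i, FiniteDimensional ℝ (E i)]
  (I : ∀ i, E i →ₗ[ℝ] V) (R : ∀ i, E i →ₗ[ℝ] E i)

noncomputable def additivePreconditioner : V →ₗ[ℝ] V :=
  ∑ i, I i ∘ₗ R i ∘ₗ adjoint (I i)

def splittingEnergies (Rinv : ∀ i, E i →ₗ[ℝ] E i) (u : V) : Set ℝ :=
  {c | ∃ w : ∀ i, E i, ∑ i, I i (w i) = u ∧ c = ∑ i, ⟪Rinv i (w i), w i⟫}

theorem additivePreconditioner_apply (u : V) :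
    additivePreconditioner I R u = ∑ i, I i (R i (adjoint (I i) u)) := by
  simp [additivePreconditioner, LinearMap.sum_apply]

theorem inner_additivePreconditioner_left (u w : V) :
    ⟪additivePreconditioner I R u, w⟫ = ∑ i, ⟪R i (adjoint (I i) u), adjoint (I i) w⟫ := by
  simp only [additivePreconditioner_apply, sum_inner, adjoint_inner_right]

variable {R}

theorem isSymmetric_additivePreconditioner (hR : ∀ i, (R i).IsSymmetric) :
    (additivePreconditioner I R).IsSymmetric :=
  isSymmetric_sum _ fun i _ => (hR i).conj_adjoint (I i)

variable {I} in
theorem exists_adjoint_apply_ne_zero (hI : ∀ v : V, ∃ w : ∀ i, E i, ∑ i, I i (w i) = v)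
    {u : V} (hu : u ≠ 0) : ∃ i, adjoint (I i) u ≠ 0 := by
  by_contra! h
  obtain ⟨w, hw⟩ := hI u
  refine hu ((inner_self_eq_zero (𝕜 := ℝ)).mp ?_)
  calc ⟪u, u⟫ = ∑ i, ⟪adjoint (I i) u, w i⟫ := by
        simp only [adjoint_inner_left, ← inner_sum, hw]
    _ = 0 := by simp only [h, inner_zero_left, sum_const_zero]

theorem inner_additivePreconditioner_self_pos
    (hI : ∀ v : V, ∃ w : ∀ i, E i, ∑ i, I i (w i) = v)
    (hR : ∀ i (x : E i), x ≠ 0 → 0 < ⟪R i x, x⟫) {u : V} (hu : u ≠ 0) :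
    0 < ⟪additivePreconditioner I R u, u⟫ := by
  obtain ⟨i, hi⟩ := exists_adjoint_apply_ne_zero hI hu
  rw [inner_additivePreconditioner_left]
  exact sum_pos' (fun j _ => (R j).inner_map_self_nonneg_of_pos (hR j) _)
    ⟨i, mem_univ i, hR i _ hi⟩

variable {Rinv : ∀ i, E i →ₗ[ℝ] E i}

theorem inner_additivePreconditioner_le_of_mem_splittingEnergies
    (hR : ∀ i, (R i).IsPositive) (hRinv : ∀ i, R i ∘ₗ Rinv i = LinearMap.id) (v : V) {c : ℝ}
    (hc : c ∈ splittingEnergies I Rinv (additivePreconditioner I R v)) :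
    ⟪v, additivePreconditioner I R v⟫ ≤ c := by
  obtain ⟨w, hw, rfl⟩ := hc
  have hlin : ∑ i, ⟪adjoint (I i) v, w i⟫ = ⟪v, additivePreconditioner I R v⟫ := by
    simp only [← hw, inner_sum, adjoint_inner_left]
  have hquad : ∑ i, ⟪R i (adjoint (I i) v), adjoint (I i) v⟫
      = ⟪v, additivePreconditioner I R v⟫ := by
    rw [real_inner_comm, inner_additivePreconditioner_left]
  have := sum_le_sum fun i (_ : i ∈ univ) =>
    (hR i).two_mul_inner_sub_le (hRinv i) (adjoint (I i) v) (w i)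
  rw [sum_sub_distrib, ← mul_sum, hlin, hquad] at this
  linarith

/-- The splitting `wᵢ = Rᵢ Iᵢᵗ v` of `B v` realizes the energy `⟪v, B v⟫`. -/
theorem inner_additivePreconditioner_mem_splittingEnergies
    (hRinv : ∀ i, Rinv i ∘ₗ R i = LinearMap.id) (v : V) :
    ⟪v, additivePreconditioner I R v⟫ ∈
      splittingEnergies I Rinv (additivePreconditioner I R v) := by
  refine ⟨fun i => R i (adjoint (I i) v), (additivePreconditioner_apply I R v).symm, ?_⟩
  calc ⟪v, additivePreconditioner I R v⟫
      = ∑ i, ⟪R i (adjoint (I i) v), adjoint (I i) v⟫ := by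
        rw [real_inner_comm, inner_additivePreconditioner_left]
    _ = ∑ i, ⟪Rinv i (R i (adjoint (I i) v)), R i (adjoint (I i) v)⟫ := by
        simp only [← LinearMap.comp_apply (Rinv _), hRinv, LinearMap.id_apply, real_inner_comm]

theorem isLeast_splittingEnergies (hR : ∀ i, (R i).IsPositive)
    (hRinv₁ : ∀ i, R i ∘ₗ Rinv i = LinearMap.id) (hRinv₂ : ∀ i, Rinv i ∘ₗ R i = LinearMap.id)
    (v : V) :
    IsLeast (splittingEnergies I Rinv (additivePreconditioner I R v))
      ⟪v, additivePreconditioner I R v⟫ :=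
  ⟨inner_additivePreconditioner_mem_splittingEnergies I hRinv₂ v,
    fun _ => inner_additivePreconditioner_le_of_mem_splittingEnergies I hR hRinv₁ v⟩

end Preconditioner

theorem stmt_4 {V : Type*} [NormedAddCommGroup V] [InnerProductSpace ℝ V]
    [FiniteDimensional ℝ V] (J : ℕ)
    (Vi : Fin (J + 1) → Submodule ℝ V)
    (R Rinv : ∀ i, Vi i →ₗ[ℝ] Vi i)
    (hRsym : ∀ i (u v : Vi i), ⟪R i u, v⟫ = ⟪u, R i v⟫)
    (hRpos : ∀ i (u : Vi i), u ≠ 0 → 0 < ⟪R i u, u⟫)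
    (hRinv₁ : ∀ i, R i ∘ₗ Rinv i = LinearMap.id)
    (hRinv₂ : ∀ i, Rinv i ∘ₗ R i = LinearMap.id)
    (hspan : ∀ v : V, ∃ w : ∀ i, Vi i, (∑ i, ((w i : V))) = v)
    (B : V →ₗ[ℝ] V)
    (hB : B = ∑ i, (Vi i).subtype ∘ₗ R i ∘ₗ LinearMap.adjoint (Vi i).subtype) :
    (∀ u v : V, ⟪B u, v⟫ = ⟪u, B v⟫) ∧
    (∀ u : V, u ≠ 0 → 0 < ⟪B u, u⟫) ∧
    (∀ u v : V, B v = u →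
      IsGLB {c : ℝ | ∃ w : ∀ i, Vi i, (∑ i, ((w i : V))) = u ∧
        c = ∑ i, ⟪Rinv i (w i), w i⟫} ⟪v, u⟫) := by
  have hB' : B = additivePreconditioner (fun i => (Vi i).subtype) R := hB
  subst hB'
  have hRpositive : ∀ i, (R i).IsPositive := fun i =>
    (isPositive_iff _).mpr ⟨hRsym i, (R i).inner_map_self_nonneg_of_pos (hRpos i)⟩
  refine ⟨isSymmetric_additivePreconditioner _ hRsym,
    fun u => inner_additivePreconditioner_self_pos _ hspan hRpos, ?_⟩
  rintro _ v rfl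
  exact (isLeast_splittingEnergies (fun i => (Vi i).subtype) hRpositive hRinv₁ hRinv₂ v).isGLB
end

section
/- Let $V$ be a finite-dimensional real inner product space, $A$ symmetric positive definite with energy norm $\|\cdot\|_A$, and $V = \sum_{i=0}^J V_i$ with smoothers $R_i$ and $B = \sum_{i=0}^J I_i R_i I_i^t$ as above. Assume: (i) there are positive $h_i$ and $c_R > 0$ such that $(R_i^{-1}u_i,u_i) \le c_R h_i^{-2}\|u_i\|_0^2$ for all $u_i \in V_i$, and (ii) every $v \in V$ admits a splitting $v = \sum_{i=0}^J v_i$, $v_i \in V_i$, with $\sum_{i=0}^J h_i^{-2}\|v_i\|_0^2 \le c_D \|v\|_A^2$. Then the minimum eigenvalue of $BA$ satisfies $\lambda_{\min}(BA) \ge (c_R c_D)^{-1}$. -/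
open scoped RealInnerProductSpace

theorem stmt_6 {V : Type*} [NormedAddCommGroup V] [InnerProductSpace ℝ V]
    [FiniteDimensional ℝ V] (J : ℕ)
    (A : V →ₗ[ℝ] V)
    (hAsym : ∀ u v : V, ⟪A u, v⟫ = ⟪u, A v⟫)
    (hApos : ∀ u : V, u ≠ 0 → 0 < ⟪A u, u⟫)
    (Vi : Fin (J + 1) → Submodule ℝ V)
    (R Rinv : ∀ i, Vi i →ₗ[ℝ] Vi i)
    (hRsym : ∀ i (u v : Vi i), ⟪R i u, v⟫ = ⟪u, R i v⟫)
    (hRpos : ∀ i (u : Vi i), u ≠ 0 → 0 < ⟪R i u, u⟫)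
    (hRinv₁ : ∀ i, R i ∘ₗ Rinv i = LinearMap.id)
    (hRinv₂ : ∀ i, Rinv i ∘ₗ R i = LinearMap.id)
    (B : V →ₗ[ℝ] V)
    (hB : B = ∑ i, (Vi i).subtype ∘ₗ R i ∘ₗ LinearMap.adjoint (Vi i).subtype)
    (h : Fin (J + 1) → ℝ) (hh : ∀ i, 0 < h i)
    (cR cD : ℝ) (hcR : 0 < cR) (hcD : 0 < cD)
    (hsmooth : ∀ i (u : Vi i), ⟪Rinv i u, u⟫ ≤ cR * ((h i) ^ 2)⁻¹ * ‖(u : V)‖ ^ 2)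
    (hstable : ∀ v : V, ∃ w : ∀ i, Vi i, (∑ i, ((w i : V))) = v ∧
      ∑ i, ((h i) ^ 2)⁻¹ * ‖(w i : V)‖ ^ 2 ≤ cD * ⟪A v, v⟫) :
    ∀ μ : ℝ, Module.End.HasEigenvalue (B ∘ₗ A) μ → (cR * cD)⁻¹ ≤ μ := by
  intro mu hmu
  obtain ⟨v, hv⟩ := hmu.exists_hasEigenvector
  have hv0 : v ≠ 0 := hv.right
  have hveq : (B ∘ₗ A) v = mu • v := hv.apply_eq_smul
  obtain ⟨w, hwsum, hwstab⟩ := hstable v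
  set f : V := A v with hf
  set p : ∀ i, Vi i := fun i => LinearMap.adjoint (Vi i).subtype f with hp
  set t : ℝ := cR * cD with ht
  have ht0 : 0 < t := mul_pos hcR hcD
  -- nonnegativity of R-form
  have hRnn : ∀ i (z : Vi i), 0 ≤ ⟪R i z, z⟫ := by
    intro i z
    rcases eq_or_ne z 0 with rfl | hz
    · simp
    · exact le_of_lt (hRpos i z hz)
  -- per-term inequality
  have key : ∀ i, 2 * t * ⟪f, ((w i : V))⟫ ≤
      t ^ 2 * ⟪R i (p i), p i⟫ + ⟪Rinv i (w i), w i⟫ := by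
    intro i
    have h0 := hRnn i (t • p i - Rinv i (w i))
    have e1 : ⟪R i (p i), Rinv i (w i)⟫ = ⟪p i, w i⟫ := by
      rw [hRsym]
      have : R i (Rinv i (w i)) = w i := by
        have := congrArg (fun L => L (w i)) (hRinv₁ i)
        simpa using this
      rw [this]
    have e2 : ⟪R i (Rinv i (w i)), Rinv i (w i)⟫ = ⟪Rinv i (w i), w i⟫ := by
      have : R i (Rinv i (w i)) = w i := by
        have := congrArg (fun L => L (w i)) (hRinv₁ i)
        simpa using this
      rw [this, real_inner_comm]
    have e3 : ⟪p i, w i⟫ = ⟪f, ((w i : V))⟫ := by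
      rw [hp]
      simpa using (LinearMap.adjoint_inner_left (Vi i).subtype (w i) f)
    have expand : ⟪R i (t • p i - Rinv i (w i)), t • p i - Rinv i (w i)⟫ =
        t ^ 2 * ⟪R i (p i), p i⟫ - 2 * t * ⟪p i, w i⟫ + ⟪Rinv i (w i), w i⟫ := by
      rw [map_sub, map_smul]
      simp only [inner_sub_left, inner_sub_right, real_inner_smul_left,
        real_inner_smul_right]
      rw [e1, e2]
      have e5 : ⟪R i (Rinv i (w i)), p i⟫ = ⟪p i, w i⟫ := by
        have : R i (Rinv i (w i)) = w i := by
          have := congrArg (fun L => L (w i)) (hRinv₁ i)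
          simpa using this
        rw [this, real_inner_comm]
      rw [e5]
      ring
    rw [expand] at h0
    rw [← e3]
    linarith
  -- sum the inequalities
  have hsum : 2 * t * ⟪f, v⟫ ≤ t ^ 2 * (∑ i, ⟪R i (p i), p i⟫) +
      ∑ i, ⟪Rinv i (w i), w i⟫ := by
    have hleft : ∑ i, ⟪f, ((w i : V))⟫ = ⟪f, v⟫ := by
      rw [← inner_sum, hwsum]
    calc 2 * t * ⟪f, v⟫ = ∑ i, 2 * t * ⟪f, ((w i : V))⟫ := by
          rw [← Finset.mul_sum, hleft]
      _ ≤ ∑ i, (t ^ 2 * ⟪R i (p i), p i⟫ + ⟪Rinv i (w i), w i⟫) :=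
          Finset.sum_le_sum (fun i _ => key i)
      _ = t ^ 2 * (∑ i, ⟪R i (p i), p i⟫) + ∑ i, ⟪Rinv i (w i), w i⟫ := by
          rw [Finset.sum_add_distrib, Finset.mul_sum]
  -- identify the B term
  have hBf : ⟪B f, f⟫ = ∑ i, ⟪R i (p i), p i⟫ := by
    rw [hB]
    rw [LinearMap.sum_apply, sum_inner]
    refine Finset.sum_congr rfl (fun i _ => ?_)
    simp only [LinearMap.coe_comp, Function.comp_apply, Submodule.coe_subtype]
    exact (LinearMap.adjoint_inner_right (Vi i).subtype (R i (p i)) f).symm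
  have hBf2 : ⟪B f, f⟫ = mu * ⟪f, v⟫ := by
    have : B f = mu • v := hveq
    rw [this, real_inner_smul_left]
    rw [hf, real_inner_comm]
  -- smoothing bound
  have hsm : ∑ i, ⟪Rinv i (w i), w i⟫ ≤ cR * cD * ⟪A v, v⟫ := by
    calc ∑ i, ⟪Rinv i (w i), w i⟫
        ≤ ∑ i, cR * ((h i) ^ 2)⁻¹ * ‖((w i : V))‖ ^ 2 :=
          Finset.sum_le_sum (fun i _ => hsmooth i (w i))
      _ = cR * ∑ i, ((h i) ^ 2)⁻¹ * ‖((w i : V))‖ ^ 2 := by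
          rw [Finset.mul_sum]; exact Finset.sum_congr rfl (fun i _ => by ring)
      _ ≤ cR * (cD * ⟪A v, v⟫) := by
          exact mul_le_mul_of_nonneg_left hwstab (le_of_lt hcR)
      _ = cR * cD * ⟪A v, v⟫ := by ring
  have hS : 0 < ⟪f, v⟫ := hApos v hv0
  have hfv : ⟪f, v⟫ = ⟪A v, v⟫ := rfl
  rw [← hBf, hBf2] at hsum
  rw [← ht] at hsm
  have hfin : 2 * t * ⟪f, v⟫ ≤ t ^ 2 * (mu * ⟪f, v⟫) + t * ⟪A v, v⟫ := by
    calc 2 * t * ⟪f, v⟫ ≤ t ^ 2 * (mu * ⟪f, v⟫) + ∑ i, ⟪Rinv i (w i), w i⟫ := hsum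
      _ ≤ t ^ 2 * (mu * ⟪f, v⟫) + t * ⟪A v, v⟫ := by linarith
  rw [hfv] at hfin hS
  have ht2 : t ≤ t ^ 2 * mu := by
    by_contra hc
    push_neg at hc
    nlinarith [mul_pos (sub_pos.mpr hc) hS]
  have h1 : 1 ≤ t * mu := by
    have h0 : t * 1 ≤ t * (t * mu) := by nlinarith
    exact (mul_le_mul_iff_right₀ ht0).mp h0
  have h2 : t⁻¹ ≤ mu := by
    have h3 := mul_le_mul_of_nonneg_left h1 (inv_nonneg.mpr ht0.le)
    rw [mul_one, ← mul_assoc, inv_mul_cancel₀ ht0.ne', one_mul] at h3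
    exact h3
  exact h2
end

section
/- Let $V$ be a finite-dimensional real vector space with two inner products: the $L^2$-type inner product $(\cdot,\cdot)_0$ with norm $\|\cdot\|_0$, and the energy form $a(\cdot,\cdot)$ with norm $\|\cdot\|_A$, where $a$ is symmetric positive definite. Fix a basis $(T_1,\ldots,T_n)$ of $V$, positive reals $h > 0$, and constants $c_1, c_2, c_3, c_4 > 0$ such that: (i) $c_1 h^d \sum_k \eta_k^2 \le \|\sum_k \eta_k T_k\|_0^2 \le c_2 h^d \sum_k \eta_k^2$ for all coefficients $\eta$ (mass matrix spectral equivalence with identity, up to scaling $h^d$); and (ii) $c_3 h^{-2} \|T_k\|_0^2 \le \|T_k\|_A^2 \le c_4 h^{-2} \|T_k\|_0^2$ for each basis function $T_k$. Then the Jacobi smoother in this basis, defined by $(R^{-1}u,u) := \sum_k \eta_k^2\, a(T_k,T_k)$ for $u = \sum_k \eta_k T_k$, satisfies $c\, h^{-2}\|u\|_0^2 \le (R^{-1}u,u) \le C\, h^{-2}\|u\|_0^2$ for all $u \in V$, with $c = c_1 c_3 / c_2$ and $C = c_2 c_4 / c_1$. -/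
/-!
Testing the $L^2$-stability of the basis against unit coefficient vectors gives
$c_1 h^d \le \|T_k\|_0^2 \le c_2 h^d$, so by the inverse/Poincaré inequalities every diagonal
entry $a(T_k,T_k)$ is comparable to $h^{d-2}$. Hence both $(R^{-1}u,u)$ and $h^{-2}\|u\|_0^2$ are
comparable to $h^{d-2}\sum_k \eta_k^2$, and therefore to each other.
-/

open Finset

lemma norm_sq_mem_of_sum_smul_bounds {ι V : Type*} [Fintype ι] [DecidableEq ι]
    [NormedAddCommGroup V] [Module ℝ V] {T : ι → V} {m M : ℝ}
    (hT : ∀ η : ι → ℝ, m * ∑ k, η k ^ 2 ≤ ‖∑ k, η k • T k‖ ^ 2 ∧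
      ‖∑ k, η k • T k‖ ^ 2 ≤ M * ∑ k, η k ^ 2) (k : ι) :
    m ≤ ‖T k‖ ^ 2 ∧ ‖T k‖ ^ 2 ≤ M := by
  simpa [Pi.single_apply, ite_smul] using hT (Pi.single k 1)

lemma sum_sq_mul_mem_of_forall_mem {ι : Type*} (s : Finset ι) {w η : ι → ℝ} {m M : ℝ}
    (hw : ∀ k, m ≤ w k ∧ w k ≤ M) :
    m * ∑ k ∈ s, η k ^ 2 ≤ ∑ k ∈ s, η k ^ 2 * w k ∧
      ∑ k ∈ s, η k ^ 2 * w k ≤ M * ∑ k ∈ s, η k ^ 2 := by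
  rw [mul_sum, mul_sum]
  exact ⟨sum_le_sum fun k _ => by nlinarith [(hw k).1, sq_nonneg (η k)],
    sum_le_sum fun k _ => by nlinarith [(hw k).2, sq_nonneg (η k)]⟩

lemma mul_mem_of_mem_of_mul_mem {x y m M α β : ℝ} (hα : 0 ≤ α) (hβ : 0 ≤ β)
    (hx : m ≤ x ∧ x ≤ M) (hy : α * x ≤ y ∧ y ≤ β * x) :
    α * m ≤ y ∧ y ≤ β * M :=
  ⟨(mul_le_mul_of_nonneg_left hx.1 hα).trans hy.1,
    hy.2.trans (mul_le_mul_of_nonneg_left hx.2 hβ)⟩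

lemma div_mul_mem_of_common_bounds {x N J α β α' β' : ℝ} (hα : 0 < α) (hβ : 0 < β)
    (hα' : 0 ≤ α') (hβ' : 0 ≤ β')
    (hN : α * x ≤ N ∧ N ≤ β * x) (hJ : α' * x ≤ J ∧ J ≤ β' * x) :
    α' / β * N ≤ J ∧ J ≤ β' / α * N := by
  constructor
  · calc α' / β * N ≤ α' / β * (β * x) := by gcongr; exact hN.2
      _ = α' * x := by field_simp
      _ ≤ J := hJ.1
  · calc J ≤ β' * x := hJ.2
      _ = β' / α * (α * x) := by field_simp
      _ ≤ β' / α * N := by gcongr; exact hN.1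

theorem stmt_8_general {V : Type*} [NormedAddCommGroup V] [InnerProductSpace ℝ V]
    (n d : ℕ) (T : Fin n → V)
    (a : V →ₗ[ℝ] V →ₗ[ℝ] ℝ)
    (h : ℝ)
    (c₁ c₂ c₃ c₄ : ℝ) (hc₁ : 0 < c₁) (hc₂ : 0 < c₂) (hc₃ : 0 < c₃) (hc₄ : 0 < c₄)
    (hmass : ∀ η : Fin n → ℝ,
      c₁ * h ^ d * ∑ k, η k ^ 2 ≤ ‖∑ k, η k • T k‖ ^ 2 ∧
      ‖∑ k, η k • T k‖ ^ 2 ≤ c₂ * h ^ d * ∑ k, η k ^ 2)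
    (hinv : ∀ k, c₃ * (h ^ 2)⁻¹ * ‖T k‖ ^ 2 ≤ a (T k) (T k) ∧
      a (T k) (T k) ≤ c₄ * (h ^ 2)⁻¹ * ‖T k‖ ^ 2) :
    ∀ η : Fin n → ℝ,
      (c₁ * c₃ / c₂) * (h ^ 2)⁻¹ * ‖∑ k, η k • T k‖ ^ 2 ≤
          ∑ k, η k ^ 2 * a (T k) (T k) ∧
      ∑ k, η k ^ 2 * a (T k) (T k) ≤
          (c₂ * c₄ / c₁) * (h ^ 2)⁻¹ * ‖∑ k, η k • T k‖ ^ 2 := by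
  intro η
  have hdiag : ∀ k, c₃ * (h ^ 2)⁻¹ * (c₁ * h ^ d) ≤ a (T k) (T k) ∧
      a (T k) (T k) ≤ c₄ * (h ^ 2)⁻¹ * (c₂ * h ^ d) := fun k =>
    mul_mem_of_mem_of_mul_mem (by positivity) (by positivity)
      (norm_sq_mem_of_sum_smul_bounds hmass k) (hinv k)
  obtain ⟨hJ₁, hJ₂⟩ := sum_sq_mul_mem_of_forall_mem univ (η := η) hdiag
  obtain ⟨hN₁, hN₂⟩ := hmass η
  rw [div_mul_eq_mul_div (c₁ * c₃), div_mul_eq_mul_div (c₂ * c₄)]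
  refine div_mul_mem_of_common_bounds (x := h ^ d * ∑ k, η k ^ 2) hc₁ hc₂ (by positivity)
    (by positivity) ⟨?_, ?_⟩ ⟨?_, ?_⟩ <;> linarith

theorem stmt_8 {V : Type*} [NormedAddCommGroup V] [InnerProductSpace ℝ V]
    (n d : ℕ) (T : Fin n → V)
    (a : V →ₗ[ℝ] V →ₗ[ℝ] ℝ)
    (hasym : ∀ u w, a u w = a w u) (hapos : ∀ u, u ≠ 0 → 0 < a u u)
    (h : ℝ) (hh : 0 < h)
    (c₁ c₂ c₃ c₄ : ℝ) (hc₁ : 0 < c₁) (hc₂ : 0 < c₂) (hc₃ : 0 < c₃) (hc₄ : 0 < c₄)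
    (hmass : ∀ η : Fin n → ℝ,
      c₁ * h ^ d * ∑ k, η k ^ 2 ≤ ‖∑ k, η k • T k‖ ^ 2 ∧
      ‖∑ k, η k • T k‖ ^ 2 ≤ c₂ * h ^ d * ∑ k, η k ^ 2)
    (hinv : ∀ k, c₃ * (h ^ 2)⁻¹ * ‖T k‖ ^ 2 ≤ a (T k) (T k) ∧
      a (T k) (T k) ≤ c₄ * (h ^ 2)⁻¹ * ‖T k‖ ^ 2) :
    ∀ η : Fin n → ℝ,
      (c₁ * c₃ / c₂) * (h ^ 2)⁻¹ * ‖∑ k, η k • T k‖ ^ 2 ≤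
          ∑ k, η k ^ 2 * a (T k) (T k) ∧
      ∑ k, η k ^ 2 * a (T k) (T k) ≤
          (c₂ * c₄ / c₁) * (h ^ 2)⁻¹ * ‖∑ k, η k • T k‖ ^ 2 :=
  stmt_8_general n d T a h c₁ c₂ c₃ c₄ hc₁ hc₂ hc₃ hc₄ hmass hinv
end

section
/- Let $V_0 \subseteq V_1 \subseteq \cdots \subseteq V_L$ be nested finite-dimensional subspaces of a Hilbert space $H$ with norm $\|\cdot\|_0$, energy seminorm $\|\cdot\|_A$ on $V_L$, and mesh sizes $h_\ell = 2^{-\ell}$. Suppose: (i) linear projectors $P_\ell : H \to V_\ell$ give a stable fine-scale decomposition, i.e., for $\bar v_\ell := (P_\ell - P_{\ell-1})v$ (with $P_{-1}=0$) one has $\sum_{\ell=0}^L h_\ell^{-2} \|\bar v_\ell\|_0^2 \le C_0 \|v\|_A^2$ for all $v \in V_L$; (ii) linear operators $I_k : H \to V_k$ (quasi-interpolants) satisfy $(I_k - I_{k-1}) \bar v_\ell = 0$ whenever $\ell \le k - m$, and the uniform stability bound $\|(I_k - I_{k-1}) w\|_0 \le C_1 \|w\|_0$ for all $w \in H$ and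 all $k$. Then there is a constant $C$ depending only on $m$, $C_0$, $C_1$ such that the decomposition $v_k := (I_k - I_{k-1}) v$ satisfies $\sum_{k=0}^L h_k^{-2}\|v_k\|_0^2 \le C \|v\|_A^2$. -/
theorem stmt_18 (m : ℕ) (hm : 1 ≤ m) (C₀ C₁ : ℝ) (hC₀ : 0 < C₀) (hC₁ : 0 < C₁) :
    ∃ C : ℝ, 0 < C ∧
      ∀ (H : Type) [NormedAddCommGroup H] [InnerProductSpace ℝ H]
        (L : ℕ) (normA : H → ℝ) (P I : ℕ → H →ₗ[ℝ] H) (v : H),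
        P L v = v →
        (∑ ℓ ∈ Finset.range (L + 1),
            (4 : ℝ) ^ ℓ * ‖P ℓ v - (if ℓ = 0 then 0 else P (ℓ - 1) v)‖ ^ 2 ≤
          C₀ * normA v ^ 2) →
        (∀ k ≤ L, ∀ ℓ ≤ L, ℓ + m ≤ k →
          I k (P ℓ v - (if ℓ = 0 then 0 else P (ℓ - 1) v)) =
            (if k = 0 then 0 else
              I (k - 1) (P ℓ v - (if ℓ = 0 then 0 else P (ℓ - 1) v)))) →
        (∀ k ≤ L, ∀ w : H,
          ‖I k w - (if k = 0 then 0 else I (k - 1) w)‖ ≤ C₁ * ‖w‖) →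
        ∑ k ∈ Finset.range (L + 1),
            (4 : ℝ) ^ k * ‖I k v - (if k = 0 then 0 else I (k - 1) v)‖ ^ 2 ≤
          C * normA v ^ 2 := by
  refine ⟨C₁ ^ 2 * 4 ^ m * C₀, by positivity, ?_⟩
  intro H _ _ L normA P I v hPL hstable hvanish hIstab
  set bar : ℕ → H := fun ℓ => P ℓ v - (if ℓ = 0 then 0 else P (ℓ - 1) v) with hbar
  set a : ℕ → ℝ := fun ℓ => ‖bar ℓ‖ with ha
  -- telescoping
  have htel : ∀ n, ∑ ℓ ∈ Finset.range (n + 1), bar ℓ = P n v := by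
    intro n
    induction n with
    | zero => simp [hbar]
    | succ n ih =>
      rw [Finset.sum_range_succ, ih]
      simp [hbar]
  have hv : ∑ ℓ ∈ Finset.range (L + 1), bar ℓ = v := by rw [htel L, hPL]
  set S : ℕ → Finset ℕ := fun k => (Finset.range (L + 1)).filter (fun ℓ => k < ℓ + m) with hS
  -- step 1: pointwise bound
  have hDk : ∀ k ≤ L, ‖I k v - (if k = 0 then 0 else I (k - 1) v)‖ ≤ C₁ * ∑ ℓ ∈ S k, a ℓ := by
    intro k hk
    set D : H →ₗ[ℝ] H := I k - (if k = 0 then 0 else I (k - 1)) with hD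
    have hDapp : ∀ w, D w = I k w - (if k = 0 then 0 else I (k - 1) w) := by
      intro w; by_cases h : k = 0 <;> simp [hD, h]
    rw [← hDapp, ← hv, map_sum]
    have hzero : ∑ ℓ ∈ (Finset.range (L + 1)).filter (fun ℓ => ¬ k < ℓ + m), D (bar ℓ) = 0 := by
      apply Finset.sum_eq_zero
      intro ℓ hℓ
      simp only [Finset.mem_filter, Finset.mem_range, not_lt] at hℓ
      have hℓL : ℓ ≤ L := Nat.lt_succ_iff.mp hℓ.1
      have hlm : ℓ + m ≤ k := hℓ.2
      have hk0 : k ≠ 0 := by omega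
      have hvz := hvanish k hk ℓ hℓL hlm
      rw [if_neg hk0] at hvz
      rw [hDapp, if_neg hk0, sub_eq_zero]
      exact hvz
    have hsplit : ∑ ℓ ∈ Finset.range (L + 1), D (bar ℓ) = ∑ ℓ ∈ S k, D (bar ℓ) := by
      rw [← Finset.sum_filter_add_sum_filter_not (Finset.range (L + 1)) (fun ℓ => k < ℓ + m),
        hzero, add_zero]
    rw [hsplit]
    calc ‖∑ ℓ ∈ S k, D (bar ℓ)‖ ≤ ∑ ℓ ∈ S k, ‖D (bar ℓ)‖ := norm_sum_le _ _
      _ ≤ ∑ ℓ ∈ S k, C₁ * a ℓ := by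
          refine Finset.sum_le_sum fun ℓ _ => ?_
          rw [hDapp]; exact hIstab k hk (bar ℓ)
      _ = C₁ * ∑ ℓ ∈ S k, a ℓ := (Finset.mul_sum _ _ _).symm
  -- step 2: Cauchy-Schwarz with geometric weights
  have hCS : ∀ k, (4 : ℝ) ^ k * (∑ ℓ ∈ S k, a ℓ) ^ 2 ≤
      2 ^ m * ∑ ℓ ∈ S k, 2 ^ (k + ℓ) * a ℓ ^ 2 := by
    intro k
    have h1 : (∑ ℓ ∈ S k, a ℓ) ^ 2 ≤
        (∑ ℓ ∈ S k, (2 : ℝ) ^ k / 2 ^ ℓ) * ∑ ℓ ∈ S k, (2 : ℝ) ^ ℓ / 2 ^ k * a ℓ ^ 2 := by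
      have hcs := Finset.sum_mul_sq_le_sq_mul_sq (S k)
        (fun ℓ => Real.sqrt ((2 : ℝ) ^ k / 2 ^ ℓ))
        (fun ℓ => Real.sqrt ((2 : ℝ) ^ ℓ / 2 ^ k) * a ℓ)
      have heq : ∀ ℓ, Real.sqrt ((2 : ℝ) ^ k / 2 ^ ℓ) * (Real.sqrt ((2 : ℝ) ^ ℓ / 2 ^ k) * a ℓ)
          = a ℓ := by
        intro ℓ
        rw [← mul_assoc, ← Real.sqrt_mul (by positivity)]
        have hx : (2 : ℝ) ^ k / 2 ^ ℓ * ((2 : ℝ) ^ ℓ / 2 ^ k) = 1 := by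
          field_simp
        rw [hx, Real.sqrt_one, one_mul]
      simp only [heq] at hcs
      refine hcs.trans_eq ?_
      congr 1
      · refine Finset.sum_congr rfl fun ℓ _ => Real.sq_sqrt (by positivity)
      · refine Finset.sum_congr rfl fun ℓ _ => ?_
        rw [mul_pow, Real.sq_sqrt (by positivity)]
    have h2 : ∑ ℓ ∈ S k, (2 : ℝ) ^ k / 2 ^ ℓ ≤ 2 ^ m := by
      set t := k + 1 - m with ht
      have hsub : S k ⊆ Finset.Ico t (L + 1) := by
        intro ℓ hℓ
        simp only [hS, Finset.mem_filter, Finset.mem_range] at hℓ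
        simp only [Finset.mem_Ico]
        omega
      have hle : ∑ ℓ ∈ S k, (2 : ℝ) ^ k / 2 ^ ℓ ≤
          ∑ ℓ ∈ Finset.Ico t (L + 1), (2 : ℝ) ^ k / 2 ^ ℓ :=
        Finset.sum_le_sum_of_subset_of_nonneg hsub (fun ℓ _ _ => by positivity)
      refine hle.trans ?_
      have hgeom : ∑ ℓ ∈ Finset.Ico t (L + 1), (2 : ℝ) ^ k / 2 ^ ℓ
          = (2 : ℝ) ^ k * (2⁻¹ : ℝ) ^ t * ∑ j ∈ Finset.range (L + 1 - t), (2⁻¹ : ℝ) ^ j := by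
        rw [Finset.sum_Ico_eq_sum_range, Finset.mul_sum]
        refine Finset.sum_congr rfl fun j _ => ?_
        rw [pow_add]
        field_simp
        rw [one_div, inv_pow, inv_pow]
        field_simp
      rw [hgeom]
      have hg2 : ∑ j ∈ Finset.range (L + 1 - t), (2⁻¹ : ℝ) ^ j ≤ 2 := by
        rw [geom_sum_eq (by norm_num)]
        have h0 : (0:ℝ) ≤ (2⁻¹ : ℝ) ^ (L + 1 - t) := by positivity
        rw [div_le_iff_of_neg (by norm_num : (2⁻¹ - 1 : ℝ) < 0)]
        linarith
      have hpos : (0:ℝ) < (2 : ℝ) ^ k * (2⁻¹ : ℝ) ^ t := by positivity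
      have h2t : (0:ℝ) < (2:ℝ) ^ t := by positivity
      have hkt : k + 1 ≤ m + t := by omega
      have hpow : (2:ℝ) ^ (k + 1) ≤ (2:ℝ) ^ (m + t) := by
        exact pow_le_pow_right₀ one_le_two hkt
      calc (2 : ℝ) ^ k * (2⁻¹ : ℝ) ^ t * ∑ j ∈ Finset.range (L + 1 - t), (2⁻¹ : ℝ) ^ j
          ≤ (2 : ℝ) ^ k * (2⁻¹ : ℝ) ^ t * 2 := mul_le_mul_of_nonneg_left hg2 hpos.le
        _ ≤ 2 ^ m := by
            rw [inv_pow]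
            rw [show (2:ℝ) ^ k * ((2:ℝ) ^ t)⁻¹ * 2 = (2:ℝ) ^ (k+1) / 2 ^ t by
              rw [pow_succ]; ring]
            rw [div_le_iff₀ h2t]
            calc (2:ℝ) ^ (k + 1) ≤ (2:ℝ) ^ (m + t) := hpow
              _ = 2 ^ m * 2 ^ t := pow_add 2 m t
    calc (4 : ℝ) ^ k * (∑ ℓ ∈ S k, a ℓ) ^ 2
        ≤ (4 : ℝ) ^ k * ((∑ ℓ ∈ S k, (2 : ℝ) ^ k / 2 ^ ℓ) *
            ∑ ℓ ∈ S k, (2 : ℝ) ^ ℓ / 2 ^ k * a ℓ ^ 2) :=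
          mul_le_mul_of_nonneg_left h1 (by positivity)
      _ ≤ (4 : ℝ) ^ k * ((2:ℝ) ^ m * ∑ ℓ ∈ S k, (2 : ℝ) ^ ℓ / 2 ^ k * a ℓ ^ 2) := by
          refine mul_le_mul_of_nonneg_left (mul_le_mul_of_nonneg_right h2 ?_) (by positivity)
          exact Finset.sum_nonneg fun ℓ _ => by positivity
      _ = 2 ^ m * ∑ ℓ ∈ S k, 2 ^ (k + ℓ) * a ℓ ^ 2 := by
          rw [Finset.mul_sum, Finset.mul_sum, Finset.mul_sum]
          refine Finset.sum_congr rfl fun ℓ _ => ?_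
          have h4 : (4 : ℝ) ^ k = 2 ^ k * 2 ^ k := by
            rw [← pow_add, show k + k = 2 * k from (two_mul k).symm, pow_mul]; norm_num
          rw [pow_add, h4]
          have h2k : (2:ℝ) ^ k ≠ 0 := by positivity
          field_simp
  -- step 3: swap sums
  have hswap : ∑ k ∈ Finset.range (L + 1), ∑ ℓ ∈ S k, (2:ℝ) ^ (k + ℓ) * a ℓ ^ 2 ≤
      2 ^ m * ∑ ℓ ∈ Finset.range (L + 1), (4:ℝ) ^ ℓ * a ℓ ^ 2 := by
    have hrw : ∀ k, ∑ ℓ ∈ S k, (2:ℝ) ^ (k + ℓ) * a ℓ ^ 2 =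
        ∑ ℓ ∈ Finset.range (L + 1), if k < ℓ + m then (2:ℝ) ^ (k + ℓ) * a ℓ ^ 2 else 0 := by
      intro k; rw [hS, Finset.sum_filter]
    simp only [hrw]
    rw [Finset.sum_comm]
    rw [Finset.mul_sum]
    refine Finset.sum_le_sum fun ℓ _ => ?_
    have hinner : ∑ k ∈ Finset.range (L + 1),
        (if k < ℓ + m then (2:ℝ) ^ (k + ℓ) * a ℓ ^ 2 else 0) =
        ∑ k ∈ (Finset.range (L + 1)).filter (fun k => k < ℓ + m), (2:ℝ) ^ (k + ℓ) * a ℓ ^ 2 := by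
      rw [Finset.sum_filter]
    rw [hinner]
    have hsub2 : (Finset.range (L + 1)).filter (fun k => k < ℓ + m) ⊆ Finset.range (ℓ + m) := by
      intro k hk
      simp only [Finset.mem_filter, Finset.mem_range] at hk ⊢
      exact hk.2
    calc ∑ k ∈ (Finset.range (L + 1)).filter (fun k => k < ℓ + m), (2:ℝ) ^ (k + ℓ) * a ℓ ^ 2
        ≤ ∑ k ∈ Finset.range (ℓ + m), (2:ℝ) ^ (k + ℓ) * a ℓ ^ 2 :=
          Finset.sum_le_sum_of_subset_of_nonneg hsub2 (fun k _ _ => by positivity)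
      _ = (2:ℝ) ^ ℓ * a ℓ ^ 2 * ∑ k ∈ Finset.range (ℓ + m), (2:ℝ) ^ k := by
          rw [Finset.mul_sum]
          refine Finset.sum_congr rfl fun k _ => ?_
          rw [pow_add]; ring
      _ ≤ (2:ℝ) ^ ℓ * a ℓ ^ 2 * (2:ℝ) ^ (ℓ + m) := by
          refine mul_le_mul_of_nonneg_left ?_ (by positivity)
          rw [geom_sum_eq (by norm_num)]
          norm_num
      _ = 2 ^ m * ((4:ℝ) ^ ℓ * a ℓ ^ 2) := by
          rw [pow_add, show (4:ℝ) ^ ℓ = 2 ^ ℓ * 2 ^ ℓ by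
            rw [← pow_add, show ℓ + ℓ = 2 * ℓ from (two_mul ℓ).symm, pow_mul]; norm_num]
          ring
  -- conclusion
  have hstable' : ∑ ℓ ∈ Finset.range (L + 1), (4:ℝ) ^ ℓ * a ℓ ^ 2 ≤ C₀ * normA v ^ 2 := hstable
  calc ∑ k ∈ Finset.range (L + 1),
        (4 : ℝ) ^ k * ‖I k v - (if k = 0 then 0 else I (k - 1) v)‖ ^ 2
      ≤ ∑ k ∈ Finset.range (L + 1), (4 : ℝ) ^ k * (C₁ * ∑ ℓ ∈ S k, a ℓ) ^ 2 := by
        refine Finset.sum_le_sum fun k hk => ?_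
        have hkL : k ≤ L := Nat.lt_succ_iff.mp (Finset.mem_range.mp hk)
        refine mul_le_mul_of_nonneg_left ?_ (by positivity)
        exact pow_le_pow_left₀ (norm_nonneg _) (hDk k hkL) 2
    _ = C₁ ^ 2 * ∑ k ∈ Finset.range (L + 1), (4 : ℝ) ^ k * (∑ ℓ ∈ S k, a ℓ) ^ 2 := by
        rw [Finset.mul_sum]
        refine Finset.sum_congr rfl fun k _ => ?_
        rw [mul_pow]; ring
    _ ≤ C₁ ^ 2 * ∑ k ∈ Finset.range (L + 1), 2 ^ m * ∑ ℓ ∈ S k, (2:ℝ) ^ (k + ℓ) * a ℓ ^ 2 := by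
        refine mul_le_mul_of_nonneg_left (Finset.sum_le_sum fun k _ => hCS k) (by positivity)
    _ = C₁ ^ 2 * 2 ^ m * ∑ k ∈ Finset.range (L + 1), ∑ ℓ ∈ S k, (2:ℝ) ^ (k + ℓ) * a ℓ ^ 2 := by
        rw [← Finset.mul_sum, ← mul_assoc]
    _ ≤ C₁ ^ 2 * 2 ^ m * (2 ^ m * ∑ ℓ ∈ Finset.range (L + 1), (4:ℝ) ^ ℓ * a ℓ ^ 2) :=
        mul_le_mul_of_nonneg_left hswap (by positivity)
    _ ≤ C₁ ^ 2 * 2 ^ m * (2 ^ m * (C₀ * normA v ^ 2)) := by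
        refine mul_le_mul_of_nonneg_left (mul_le_mul_of_nonneg_left hstable' (by positivity))
          (by positivity)
    _ = C₁ ^ 2 * 4 ^ m * C₀ * normA v ^ 2 := by
        rw [show (4:ℝ) ^ m = 2 ^ m * 2 ^ m by
          rw [← pow_add, show m + m = 2 * m from (two_mul m).symm, pow_mul]; norm_num]
        ring
end
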